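/- If prover cannot force infinite plays, refuter can force termination with a decreasing measure: define the attractor level of a non-terminal X to be the least i such that the i-th Kleene approximant σ^i(X) is not equivalent to false (∞ if none exists), level 0 for terminals, and for a sentential form β define level(β) = Σ_j |G|^{(attractor level of β_j)}, where |G| bounds the length of any rule's right-hand side plus one. Then from any position wXβ with σ(wXβ) ≢ false: if X is owned by prover, every rule X → η yields level(wηβ) < level(wXβ); if X is owned by refuter, some rule X → η yields level(wηβ) < level(wXβ). Hence refuter has a strategy ensuring all conforming plays are finite. -/

import Mathlib

/-- Negation-free Boolean formulas over atomic propositions (boxes) `B`,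
with a distinguished formula `fls` (false). -/
inductive Formula (B : Type) : Type where
  | fls : Formula B
  | box : B → Formula B
  | and : Formula B → Formula B → Formula B
  | or : Formula B → Formula B → Formula B

namespace Formula

variable {B : Type}

/-- Satisfaction under a truth assignment to the boxes. -/
def sat (ν : B → Prop) : Formula B → Prop
  | fls => False
  | box b => ν b
  | and F G => F.sat ν ∧ G.sat ν
  | or F G => F.sat ν ∨ G.sat ν

/-- Logical equivalence of formulas. -/
def Equiv (F G : Formula B) : Prop := ∀ ν : B → Prop, F.sat ν ↔ G.sat ν

/-- Composition of a box with a formula. -/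
def boxSeq [Mul B] (r : B) : Formula B → Formula B
  | fls => fls
  | box t => box (r * t)
  | and G1 G2 => and (boxSeq r G1) (boxSeq r G2)
  | or G1 G2 => or (boxSeq r G1) (boxSeq r G2)

/-- Relational composition of formulas: `false;G = F;false = false`, it
distributes over `∧`/`∨` on the left, and boxes distribute over `∧`/`∨`. -/
def seq [Mul B] : Formula B → Formula B → Formula B
  | fls, _ => fls
  | box r, G => boxSeq r G
  | and F1 F2, G => and (F1.seq G) (F2.seq G)
  | or F1 F2, G => or (F1.seq G) (F2.seq G)

end Formula

/-- A context-free grammar with an ownership partitioning of the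
non-terminals (`prover X = true` iff `X` is owned by prover); every
non-terminal has at least one rule. -/
structure GameGrammar (N T : Type) where
  prover : N → Bool
  rules : N → List (List (N ⊕ T))
  rules_nonempty : ∀ X, rules X ≠ []

/-- Sentential forms: words over non-terminals and terminals. -/
abbrev SF (N T : Type) := List (N ⊕ T)

variable {N T B : Type}

/-- Interpretation of a sentential form under an assignment `σ` of formulas
to non-terminals: `ε ↦ id`, terminals `a ↦ ⟦a⟧`, concatenation ↦ relational
composition. -/
def interpSF [Mul B] [One B] (boxT : T → B) (σ : N → Formula B) : SF N T → Formula B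
  | [] => Formula.box 1
  | (Sum.inl X) :: rest => (σ X).seq (interpSF boxT σ rest)
  | (Sum.inr a) :: rest => (Formula.box (boxT a)).seq (interpSF boxT σ rest)

/-- Combine a (nonempty) list of formulas by conjunction (`isAnd = true`) or
disjunction. -/
def combineList (isAnd : Bool) : List (Formula B) → Formula B
  | [] => Formula.fls
  | F :: rest =>
      rest.foldl (fun acc G => if isAnd then Formula.and acc G else Formula.or acc G) F

/-- One application of the system of equations: the right-hand side for `X` is
the conjunction (if prover owns `X`) or disjunction (if refuter owns `X`) of
the interpretations of the right-hand sides of `X`'s rules. -/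
def eqStep [Mul B] [One B] (G : GameGrammar N T) (boxT : T → B)
    (σ : N → Formula B) : N → Formula B :=
  fun X => combineList (G.prover X) ((G.rules X).map (interpSF boxT σ))

/-- The `i`-th Kleene approximant, starting from `false` everywhere. -/
def approx [Mul B] [One B] (G : GameGrammar N T) (boxT : T → B) : ℕ → N → Formula B
  | 0 => fun _ => Formula.fls
  | i + 1 => eqStep G boxT (approx G boxT i)

/-- A sentential form is a terminal word. -/
def IsTerminalSF (α : SF N T) : Prop := ∀ s ∈ α, ∃ a : T, s = Sum.inr a

/-- The left-derivation relation: replace the leftmost non-terminal using a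
rule of the grammar. -/
def Derives (G : GameGrammar N T) (α β : SF N T) : Prop :=
  ∃ (w : List T) (X : N) (η : List (N ⊕ T)) (γ : SF N T),
    α = w.map Sum.inr ++ Sum.inl X :: γ ∧ η ∈ G.rules X ∧
    β = w.map Sum.inr ++ (η ++ γ)

/-- It is prover's turn: the leftmost non-terminal is owned by prover. -/
def ProverTurn (G : GameGrammar N T) (α : SF N T) : Prop :=
  ∃ (w : List T) (X : N) (γ : SF N T),
    α = w.map Sum.inr ++ Sum.inl X :: γ ∧ G.prover X = true

/-- A finite play from `α`: a nonempty sequence of positions starting in `α`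
and linked by left-derivation steps. -/
def IsPlay (G : GameGrammar N T) (α : SF N T) (p : List (SF N T)) : Prop :=
  p.head? = some α ∧ p.Chain' (Derives G)

/-- A finite play conforms to the strategy `s` of the player whose turns are
described by `turn`: whenever it is that player's turn, the next position is
the one returned by the strategy. -/
def Conforms (turn : SF N T → Prop) (s : List (SF N T) → SF N T)
    (p : List (SF N T)) : Prop :=
  ∀ (i : ℕ) (h : i + 1 < p.length),
    turn (p.get ⟨i, Nat.lt_of_succ_lt h⟩) →
    p.get ⟨i + 1, h⟩ = s (p.take (i + 1))

/-- The attractor level of a non-terminal: the least `i` such that the `i`-th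
Kleene approximant of `X` is not equivalent to `false`. -/
noncomputable def attrLevel [Mul B] [One B] (G : GameGrammar N T) (boxT : T → B)
    (X : N) : ℕ :=
  sInf {i : ℕ | ¬ Formula.Equiv (approx G boxT i X) Formula.fls}

/-- The level of a symbol: the attractor level for non-terminals, `0` for
terminals. -/
noncomputable def symLevel [Mul B] [One B] (G : GameGrammar N T) (boxT : T → B) :
    N ⊕ T → ℕ
  | Sum.inl X => attrLevel G boxT X
  | Sum.inr _ => 0

/-- The level of a sentential form: `level(β) = Σ_j c^(level of β_j)`. -/
noncomputable def sfLevel [Mul B] [One B] (G : GameGrammar N T) (boxT : T → B)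
    (c : ℕ) (β : SF N T) : ℕ :=
  (β.map fun s => c ^ symLevel G boxT s).sum

/-!
The formulas are negation-free, so `σ^i(X) ≢ false` says that the all-true assignment satisfies
`σ^i(X)`, and this is monotone in `i`. If `X` is satisfiable at stage `i₀` and first becomes so at
stage `m + 1`, then every rule `X → η` when prover owns `X`, and some rule when refuter owns it,
has all its non-terminals satisfiable at stage `m`, hence of attractor level at most `m`. With fewer
than `c` symbols, `η` then has level below `c ^ (m + 1)`, the weight of `X`. Refuter picks such
rules; along a conforming play the level strictly decreases and satisfiability at stage `i₀` of
all non-terminals is preserved, so the play is finite.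
-/

namespace Formula

variable {B : Type}

/-- Negation-free formulas are monotone in the assignment, so this is satisfiability
(`not_equiv_fls_iff_satTop`). -/
def SatTop (F : Formula B) : Prop := F.sat fun _ => True

theorem sat_mono {ν ν' : B → Prop} (h : ∀ b, ν b → ν' b) :
    ∀ {F : Formula B}, F.sat ν → F.sat ν'
  | .fls, hF => hF
  | .box _, hF => h _ hF
  | .and _ _, ⟨h₁, h₂⟩ => ⟨sat_mono h h₁, sat_mono h h₂⟩
  | .or _ _, hF => hF.imp (sat_mono h) (sat_mono h)

theorem not_equiv_fls_iff_satTop {F : Formula B} : ¬ F.Equiv fls ↔ F.SatTop :=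
  ⟨fun h => by_contra fun hF =>
      h fun _ => ⟨fun hν => hF (sat_mono (fun _ _ => trivial) hν), False.elim⟩,
    fun hF h => (h _).mp hF⟩

@[simp] theorem not_satTop_fls : ¬ (fls : Formula B).SatTop := id

@[simp] theorem satTop_box (b : B) : (box b).SatTop := trivial

@[simp] theorem satTop_and {F G : Formula B} : (F.and G).SatTop ↔ F.SatTop ∧ G.SatTop := Iff.rfl

@[simp] theorem satTop_or {F G : Formula B} : (F.or G).SatTop ↔ F.SatTop ∨ G.SatTop := Iff.rfl

@[simp] theorem satTop_boxSeq [Mul B] (r : B) (F : Formula B) :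
    (boxSeq r F).SatTop ↔ F.SatTop := by
  induction F <;> simp_all [boxSeq]

@[simp] theorem satTop_seq [Mul B] (F G : Formula B) :
    (F.seq G).SatTop ↔ F.SatTop ∧ G.SatTop := by
  induction F with
  | fls => simp [seq]
  | box r => simp [seq]
  | and F₁ F₂ ih₁ ih₂ => simp only [seq, satTop_and, ih₁, ih₂]; tauto
  | or F₁ F₂ ih₁ ih₂ => simp only [seq, satTop_or, ih₁, ih₂, or_and_right]

theorem satTop_foldl_and (L : List (Formula B)) (F : Formula B) :
    (L.foldl (fun acc G => acc.and G) F).SatTop ↔ F.SatTop ∧ ∀ G ∈ L, G.SatTop := by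
  induction L generalizing F <;> simp_all [and_assoc]

theorem satTop_foldl_or (L : List (Formula B)) (F : Formula B) :
    (L.foldl (fun acc G => acc.or G) F).SatTop ↔ F.SatTop ∨ ∃ G ∈ L, G.SatTop := by
  induction L generalizing F <;> simp_all [or_assoc]

end Formula

open Formula

theorem satTop_combineList_true {L : List (Formula B)} (hL : L ≠ []) :
    (combineList true L).SatTop ↔ ∀ F ∈ L, F.SatTop := by
  obtain ⟨F, L, rfl⟩ := List.exists_cons_of_ne_nil hL
  simp [combineList, satTop_foldl_and]

theorem satTop_combineList_false (L : List (Formula B)) :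
    (combineList false L).SatTop ↔ ∃ F ∈ L, F.SatTop := by
  cases L <;> simp [combineList, satTop_foldl_or]

def LiveUnder (σ : N → Formula B) (β : SF N T) : Prop :=
  ∀ X, Sum.inl X ∈ β → (σ X).SatTop

theorem LiveUnder.mono {σ τ : N → Formula B} {β : SF N T}
    (h : ∀ X, (σ X).SatTop → (τ X).SatTop) (hβ : LiveUnder σ β) : LiveUnder τ β :=
  fun X hX => h X (hβ X hX)

@[simp] theorem liveUnder_terminal_append {σ : N → Formula B} {w : List T} {β : SF N T} :
    LiveUnder σ (w.map Sum.inr ++ β) ↔ LiveUnder σ β := by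
  simp [LiveUnder]

@[simp] theorem liveUnder_append {σ : N → Formula B} {β γ : SF N T} :
    LiveUnder σ (β ++ γ) ↔ LiveUnder σ β ∧ LiveUnder σ γ := by
  simp only [LiveUnder, List.mem_append, or_imp, forall_and]

@[simp] theorem liveUnder_cons_inl {σ : N → Formula B} {X : N} {β : SF N T} :
    LiveUnder σ (Sum.inl X :: β) ↔ (σ X).SatTop ∧ LiveUnder σ β := by
  simp [LiveUnder]

theorem satTop_interpSF [Mul B] [One B] (boxT : T → B) (σ : N → Formula B) (β : SF N T) :
    (interpSF boxT σ β).SatTop ↔ LiveUnder σ β := by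
  induction β with
  | nil => simp [interpSF, LiveUnder]
  | cons s β ih => cases s <;> simp_all [interpSF, LiveUnder]

section Approximants

variable [Mul B] [One B] (G : GameGrammar N T) (boxT : T → B)

theorem satTop_eqStep_of_prover {σ : N → Formula B} {X : N} (hX : G.prover X = true) :
    (eqStep G boxT σ X).SatTop ↔ ∀ η ∈ G.rules X, LiveUnder σ η := by
  rw [eqStep, hX, satTop_combineList_true (by simpa using G.rules_nonempty X)]
  simp [satTop_interpSF]

theorem satTop_eqStep_of_refuter {σ : N → Formula B} {X : N} (hX : G.prover X = false) :
    (eqStep G boxT σ X).SatTop ↔ ∃ η ∈ G.rules X, LiveUnder σ η := by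
  simp [eqStep, hX, satTop_combineList_false, satTop_interpSF]

theorem satTop_eqStep_mono {σ τ : N → Formula B} (h : ∀ Y, (σ Y).SatTop → (τ Y).SatTop)
    (X : N) : (eqStep G boxT σ X).SatTop → (eqStep G boxT τ X).SatTop := by
  cases hX : G.prover X
  · simp only [satTop_eqStep_of_refuter G boxT hX]
    exact fun ⟨η, hη, hl⟩ => ⟨η, hη, hl.mono h⟩
  · simp only [satTop_eqStep_of_prover G boxT hX]
    exact fun hl η hη => (hl η hη).mono h

theorem satTop_approx_succ : ∀ (i : ℕ) (X : N),
    (approx G boxT i X).SatTop → (approx G boxT (i + 1) X).SatTop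
  | 0, _, h => absurd h not_satTop_fls
  | i + 1, X, h => satTop_eqStep_mono G boxT (satTop_approx_succ i) X h

theorem satTop_approx_mono {i j : ℕ} (hij : i ≤ j) {X : N} :
    (approx G boxT i X).SatTop → (approx G boxT j X).SatTop :=
  monotone_nat_of_le_succ (f := fun i => (approx G boxT i X).SatTop)
    (fun i => satTop_approx_succ G boxT i X) hij

theorem attrLevel_eq_sInf (X : N) :
    attrLevel G boxT X = sInf {i | (approx G boxT i X).SatTop} := by
  simp only [attrLevel, not_equiv_fls_iff_satTop]

theorem attrLevel_le {i : ℕ} {X : N} (h : (approx G boxT i X).SatTop) :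
    attrLevel G boxT X ≤ i := by
  rw [attrLevel_eq_sInf]
  exact Nat.sInf_le h

theorem exists_attrLevel_eq_succ {i : ℕ} {X : N} (h : (approx G boxT i X).SatTop) :
    ∃ m, attrLevel G boxT X = m + 1 ∧ (eqStep G boxT (approx G boxT m) X).SatTop := by
  have hmem : (approx G boxT (attrLevel G boxT X) X).SatTop := by
    rw [attrLevel_eq_sInf]
    exact Nat.sInf_mem (s := {i | (approx G boxT i X).SatTop}) ⟨i, h⟩
  cases hl : attrLevel G boxT X with
  | zero => rw [hl] at hmem; exact absurd hmem not_satTop_fls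
  | succ m => rw [hl] at hmem; exact ⟨m, rfl, hmem⟩

end Approximants

section Levels

variable [Mul B] [One B] (G : GameGrammar N T) (boxT : T → B) (c : ℕ)

theorem sfLevel_append (β γ : SF N T) :
    sfLevel G boxT c (β ++ γ) = sfLevel G boxT c β + sfLevel G boxT c γ := by
  simp [sfLevel]

theorem sfLevel_cons (s : N ⊕ T) (β : SF N T) :
    sfLevel G boxT c (s :: β) = c ^ symLevel G boxT s + sfLevel G boxT c β := by
  simp [sfLevel]

theorem sfLevel_lt_pow_succ {η : SF N T} {m : ℕ} (hc : η.length < c)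
    (hη : ∀ s ∈ η, symLevel G boxT s ≤ m) : sfLevel G boxT c η < c ^ (m + 1) := by
  have hc₀ : 0 < c := by omega
  calc sfLevel G boxT c η ≤ η.length * c ^ m := by
        simpa [sfLevel] using List.sum_le_card_nsmul (η.map fun s => c ^ symLevel G boxT s)
          (c ^ m) (List.forall_mem_map.2 fun s hs => Nat.pow_le_pow_right hc₀ (hη s hs))
    _ < c * c ^ m := Nat.mul_lt_mul_of_lt_of_le hc le_rfl (Nat.pow_pos hc₀)
    _ = c ^ (m + 1) := (pow_succ' c m).symm

theorem sfLevel_replace_lt {w : List T} {X : N} {η γ : SF N T}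
    (h : sfLevel G boxT c η < c ^ attrLevel G boxT X) :
    sfLevel G boxT c (w.map Sum.inr ++ (η ++ γ)) <
      sfLevel G boxT c (w.map Sum.inr ++ Sum.inl X :: γ) := by
  simp only [sfLevel_append, sfLevel_cons, symLevel]
  omega

theorem symLevel_le_of_liveUnder {m : ℕ} {η : SF N T}
    (h : LiveUnder (approx G boxT m) η) : ∀ s ∈ η, symLevel G boxT s ≤ m
  | .inl Y, hY => attrLevel_le G boxT (h Y hY)
  | .inr _, _ => Nat.zero_le m

end Levels

section Descent

variable [Mul B] [One B] (G : GameGrammar N T) (boxT : T → B) (c i₀ : ℕ)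

/-- `c ^ attrLevel X` is the weight of `X` in `sfLevel`, so replacing `X` by such an `η` lowers
the level (`Descends.replace`). -/
def Descends (X : N) (η : SF N T) : Prop :=
  LiveUnder (approx G boxT i₀) η ∧ sfLevel G boxT c η < c ^ attrLevel G boxT X

variable {G boxT c i₀}

theorem Descends.replace {X : N} {η : SF N T} (hη : Descends G boxT c i₀ X η) {w : List T}
    {γ : SF N T} (hα : LiveUnder (approx G boxT i₀) (w.map Sum.inr ++ Sum.inl X :: γ)) :
    LiveUnder (approx G boxT i₀) (w.map Sum.inr ++ (η ++ γ)) ∧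
      sfLevel G boxT c (w.map Sum.inr ++ (η ++ γ)) <
        sfLevel G boxT c (w.map Sum.inr ++ Sum.inl X :: γ) := by
  rw [liveUnder_terminal_append, liveUnder_cons_inl] at hα
  rw [liveUnder_terminal_append, liveUnder_append]
  exact ⟨⟨hη.1, hα.2⟩, sfLevel_replace_lt G boxT c hη.2⟩

theorem descends_of_liveUnder {X : N} {m : ℕ} (hm : attrLevel G boxT X = m + 1) (hmi : m ≤ i₀)
    {η : SF N T} (hη : η.length < c) (hl : LiveUnder (approx G boxT m) η) :
    Descends G boxT c i₀ X η :=
  ⟨hl.mono fun _ => satTop_approx_mono G boxT hmi,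
    hm ▸ sfLevel_lt_pow_succ G boxT c hη (symLevel_le_of_liveUnder G boxT hl)⟩

variable (hc : ∀ (X : N) (η : List (N ⊕ T)), η ∈ G.rules X → η.length < c)
include hc

theorem descends_of_prover {X : N} (hX : (approx G boxT i₀ X).SatTop)
    (hp : G.prover X = true) : ∀ η ∈ G.rules X, Descends G boxT c i₀ X η := by
  obtain ⟨m, hm, hstep⟩ := exists_attrLevel_eq_succ G boxT hX
  have hmi : m ≤ i₀ := by have := attrLevel_le G boxT hX; omega
  exact fun η hη => descends_of_liveUnder hm hmi (hc X η hη)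
    ((satTop_eqStep_of_prover G boxT hp).1 hstep η hη)

theorem exists_descends_of_refuter {X : N} (hX : (approx G boxT i₀ X).SatTop)
    (hp : G.prover X = false) : ∃ η ∈ G.rules X, Descends G boxT c i₀ X η := by
  obtain ⟨m, hm, hstep⟩ := exists_attrLevel_eq_succ G boxT hX
  have hmi : m ≤ i₀ := by have := attrLevel_le G boxT hX; omega
  obtain ⟨η, hη, hl⟩ := (satTop_eqStep_of_refuter G boxT hp).1 hstep
  exact ⟨η, hη, descends_of_liveUnder hm hmi (hc X η hη) hl⟩

end Descent

section LeftmostDerivation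

theorem List.getLast!_map_range_succ {α : Type*} [Inhabited α] (f : ℕ → α) (i : ℕ) :
    ((List.range (i + 1)).map f).getLast! = f i := by
  simp [List.range_succ, List.getLast!_eq_getLast?_getD]

def expandLeftmost (r : N → SF N T) : SF N T → SF N T
  | [] => []
  | .inl X :: γ => r X ++ γ
  | .inr a :: γ => .inr a :: expandLeftmost r γ

@[simp] theorem expandLeftmost_terminal_append (r : N → SF N T) (w : List T) (X : N)
    (γ : SF N T) :
    expandLeftmost r (w.map Sum.inr ++ Sum.inl X :: γ) = w.map Sum.inr ++ (r X ++ γ) := by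
  induction w <;> simp_all [expandLeftmost]

theorem exists_eq_terminal_append_of_not_isTerminalSF : ∀ {β : SF N T}, ¬ IsTerminalSF β →
    ∃ (w : List T) (X : N) (γ : SF N T), β = w.map Sum.inr ++ Sum.inl X :: γ
  | [], h => absurd (fun _ hs => absurd hs List.not_mem_nil) h
  | .inl X :: γ, _ => ⟨[], X, γ, rfl⟩
  | .inr a :: γ, h => by
      obtain ⟨w, X, γ', rfl⟩ := exists_eq_terminal_append_of_not_isTerminalSF (β := γ)
        fun hγ => h (by simpa [IsTerminalSF] using hγ)
      exact ⟨a :: w, X, γ', rfl⟩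

variable (G : GameGrammar N T)

theorem derives_expandLeftmost {r : N → SF N T} (hr : ∀ X, r X ∈ G.rules X) {β : SF N T}
    (hβ : ¬ IsTerminalSF β) : Derives G β (expandLeftmost r β) := by
  obtain ⟨w, X, γ, rfl⟩ := exists_eq_terminal_append_of_not_isTerminalSF hβ
  exact ⟨w, X, r X, γ, rfl, hr X, expandLeftmost_terminal_append r w X γ⟩

theorem findSome?_getLeft?_terminal_append (w : List T) (X : N) (γ : SF N T) :
    (w.map Sum.inr ++ Sum.inl X :: γ).findSome? Sum.getLeft? = some X := by
  induction w <;> simp_all [List.findSome?]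

theorem prover_of_proverTurn {w : List T} {X : N} {γ : SF N T}
    (h : ProverTurn G (w.map Sum.inr ++ Sum.inl X :: γ)) : G.prover X = true := by
  obtain ⟨w', X', γ', heq, hp⟩ := h
  have hX := congrArg (List.findSome? Sum.getLeft?) heq
  simp only [findSome?_getLeft?_terminal_append, Option.some.injEq] at hX
  exact hX ▸ hp

end LeftmostDerivation

section RefuterStrategy

variable [Mul B] [One B] (G : GameGrammar N T) (boxT : T → B) (c i₀ : ℕ)

/-- A descending rule when there is one, and otherwise an arbitrary rule, so that refuter always
has a legal move. -/
noncomputable def refuterRule (X : N) : SF N T :=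
  open Classical in
  if h : ∃ η ∈ G.rules X, Descends G boxT c i₀ X η then h.choose
  else (G.rules X).head (G.rules_nonempty X)

theorem refuterRule_mem (X : N) : refuterRule G boxT c i₀ X ∈ G.rules X := by
  unfold refuterRule
  split_ifs with h
  exacts [h.choose_spec.1, List.head_mem _]

variable {G boxT c i₀}

theorem refuterRule_descends {X : N} (h : ∃ η ∈ G.rules X, Descends G boxT c i₀ X η) :
    Descends G boxT c i₀ X (refuterRule G boxT c i₀ X) := by
  rw [refuterRule, dif_pos h]
  exact h.choose_spec.2

variable (hc : ∀ (X : N) (η : List (N ⊕ T)), η ∈ G.rules X → η.length < c)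
include hc

theorem conforming_step_descends {α β : SF N T} (hα : LiveUnder (approx G boxT i₀) α)
    (hd : Derives G α β)
    (hconf : ¬ ProverTurn G α → β = expandLeftmost (refuterRule G boxT c i₀) α) :
    LiveUnder (approx G boxT i₀) β ∧ sfLevel G boxT c β < sfLevel G boxT c α := by
  obtain ⟨w, X, η, γ, rfl, hη, rfl⟩ := hd
  have hX : (approx G boxT i₀ X).SatTop :=
    (liveUnder_cons_inl.1 (liveUnder_terminal_append.1 hα)).1
  cases hp : G.prover X
  · rw [hconf fun h => by simp [prover_of_proverTurn G h] at hp,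
      expandLeftmost_terminal_append]
    exact (refuterRule_descends (exists_descends_of_refuter hc hX hp)).replace hα
  · exact (descends_of_prover hc hX hp η hη).replace hα

theorem not_forall_conforming_derives (f : ℕ → SF N T)
    (h₀ : LiveUnder (approx G boxT i₀) (f 0)) (hder : ∀ i, Derives G (f i) (f (i + 1)))
    (hconf : ∀ i, ¬ ProverTurn G (f i) →
      f (i + 1) = expandLeftmost (refuterRule G boxT c i₀) (f i)) : False := by
  have hstep i (hi : LiveUnder (approx G boxT i₀) (f i)) :=
    conforming_step_descends hc hi (hder i) (hconf i)
  have hlive : ∀ i, LiveUnder (approx G boxT i₀) (f i) :=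
    Nat.rec h₀ fun i hi => (hstep i hi).1
  exact not_strictAnti_of_wellFoundedLT (fun i => sfLevel G boxT c (f i))
    (strictAnti_nat_of_succ_lt fun i => (hstep i (hlive i)).2)

end RefuterStrategy

theorem refuter_forces_termination_general [Mul B] [One B] (G : GameGrammar N T)
    (boxT : T → B) (c i₀ : ℕ)
    (hc : ∀ (X : N) (η : List (N ⊕ T)), η ∈ G.rules X → η.length < c) :
    (∀ (w : List T) (X : N) (β : SF N T),
      ¬ Formula.Equiv
          (interpSF boxT (approx G boxT i₀) (w.map Sum.inr ++ Sum.inl X :: β))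
          Formula.fls →
      ((G.prover X = true → ∀ η ∈ G.rules X,
          sfLevel G boxT c (w.map Sum.inr ++ (η ++ β)) <
            sfLevel G boxT c (w.map Sum.inr ++ Sum.inl X :: β)) ∧
       (G.prover X = false → ∃ η ∈ G.rules X,
          sfLevel G boxT c (w.map Sum.inr ++ (η ++ β)) <
            sfLevel G boxT c (w.map Sum.inr ++ Sum.inl X :: β)))) ∧
    (∀ α : SF N T,
      ¬ Formula.Equiv (interpSF boxT (approx G boxT i₀) α) Formula.fls →
      ∃ s : List (SF N T) → SF N T,
        (∀ p : List (SF N T), IsPlay G α p →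
          Conforms (fun x => ¬ ProverTurn G x) s p →
          ¬ ProverTurn G p.getLast! → ¬ IsTerminalSF p.getLast! →
          Derives G p.getLast! (s p)) ∧
        (∀ f : ℕ → SF N T, f 0 = α → (∀ i, Derives G (f i) (f (i + 1))) →
          ¬ (∀ i, ¬ ProverTurn G (f i) →
              f (i + 1) = s ((List.range (i + 1)).map f)))) := by
  have hlive {α : SF N T}
      (hα : ¬ Formula.Equiv (interpSF boxT (approx G boxT i₀) α) Formula.fls) :
      LiveUnder (approx G boxT i₀) α :=
    (satTop_interpSF boxT _ α).1 (not_equiv_fls_iff_satTop.1 hα)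
  refine ⟨fun w X β hne => ?_, fun α hne => ?_⟩
  · have hX : (approx G boxT i₀ X).SatTop :=
      (liveUnder_cons_inl.1 (liveUnder_terminal_append.1 (hlive hne))).1
    exact ⟨fun hp η hη => sfLevel_replace_lt G boxT c (descends_of_prover hc hX hp η hη).2,
      fun hp => (exists_descends_of_refuter hc hX hp).imp fun _ ⟨hη, hd⟩ =>
        ⟨hη, sfLevel_replace_lt G boxT c hd.2⟩⟩
  · refine ⟨fun p => expandLeftmost (refuterRule G boxT c i₀) p.getLast!,
      fun p _ _ _ hp => derives_expandLeftmost G (refuterRule_mem G boxT c i₀) hp,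
      fun f hf₀ hder hconf => not_forall_conforming_derives hc f (hf₀ ▸ hlive hne) hder
        fun i hi => (hconf i hi).trans (congrArg _ (List.getLast!_map_range_succ f i))⟩

/-- From any position `wXβ` whose fixed-point formula is satisfiable, every
prover move strictly decreases the level, and some refuter move strictly
decreases the level; hence refuter has a strategy (playing legal moves at her
turns) such that all conforming plays are finite. -/
theorem refuter_forces_termination [Mul B] [One B] (G : GameGrammar N T)
    (boxT : T → B) (c i₀ : ℕ)
    (hc : ∀ (X : N) (η : List (N ⊕ T)), η ∈ G.rules X → η.length < c)
    (hstab : ∀ k, i₀ ≤ k → ∀ X : N,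
      Formula.Equiv (approx G boxT k X) (approx G boxT i₀ X)) :
    (∀ (w : List T) (X : N) (β : SF N T),
      ¬ Formula.Equiv
          (interpSF boxT (approx G boxT i₀) (w.map Sum.inr ++ Sum.inl X :: β))
          Formula.fls →
      ((G.prover X = true → ∀ η ∈ G.rules X,
          sfLevel G boxT c (w.map Sum.inr ++ (η ++ β)) <
            sfLevel G boxT c (w.map Sum.inr ++ Sum.inl X :: β)) ∧
       (G.prover X = false → ∃ η ∈ G.rules X,
          sfLevel G boxT c (w.map Sum.inr ++ (η ++ β)) <
            sfLevel G boxT c (w.map Sum.inr ++ Sum.inl X :: β)))) ∧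
    (∀ α : SF N T,
      ¬ Formula.Equiv (interpSF boxT (approx G boxT i₀) α) Formula.fls →
      ∃ s : List (SF N T) → SF N T,
        (∀ p : List (SF N T), IsPlay G α p →
          Conforms (fun x => ¬ ProverTurn G x) s p →
          ¬ ProverTurn G p.getLast! → ¬ IsTerminalSF p.getLast! →
          Derives G p.getLast! (s p)) ∧
        (∀ f : ℕ → SF N T, f 0 = α → (∀ i, Derives G (f i) (f (i + 1))) →
          ¬ (∀ i, ¬ ProverTurn G (f i) →
              f (i + 1) = s ((List.range (i + 1)).map f)))) :=
  refuter_forces_termination_general G boxT c i₀ hc
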